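/- arXiv:2005.12430 — 2 statements merged into one kernel-verified Lean document; each statement's English description precedes it below -/
import Mathlib

section
/- Let μ be an associative multiplication on A, with symmetric part ρ(x,y) = μ(x,y) + μ(y,x) and skew-symmetric part ψ(x,y) = μ(x,y) − μ(y,x). Then ρ is associative if and only if ψ(y,ψ(x,z)) = 0 for all x,y,z ∈ A (the Lie bracket ψ is 2-step nilpotent). -/
/-! Expanding everything by associativity, `ρ(ρ(x,y),z) - ρ(x,ρ(y,z)) = yxz + zxy - xzy - yzx`,
and this is exactly `ψ(y,ψ(x,z))`. -/

def symPart {K A : Type*} [Field K] [AddCommGroup A] [Module K A]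
    (μ : A →ₗ[K] A →ₗ[K] A) (x y : A) : A :=
  μ x y + μ y x

def skewPart {K A : Type*} [Field K] [AddCommGroup A] [Module K A]
    (μ : A →ₗ[K] A →ₗ[K] A) (x y : A) : A :=
  μ x y - μ y x

theorem symPart_associator_eq_skewPart_skewPart {K A : Type*} [Field K] [AddCommGroup A]
    [Module K A] (μ : A →ₗ[K] A →ₗ[K] A)
    (hassoc : ∀ x y z : A, μ x (μ y z) = μ (μ x y) z) (x y z : A) :
    symPart μ (symPart μ x y) z - symPart μ x (symPart μ y z) = skewPart μ y (skewPart μ x z) := by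
  simp only [symPart, skewPart, map_add, map_sub, LinearMap.add_apply, LinearMap.sub_apply,
    hassoc]
  abel

theorem symPart_associative_iff_two_step_nilpotent_general {K A : Type*} [Field K]
    [AddCommGroup A] [Module K A]
    (μ : A →ₗ[K] A →ₗ[K] A)
    (hassoc : ∀ x y z : A, μ x (μ y z) = μ (μ x y) z) :
    (∀ x y z : A, symPart μ x (symPart μ y z) = symPart μ (symPart μ x y) z) ↔
    (∀ x y z : A, skewPart μ y (skewPart μ x z) = 0) := by
  refine forall₃_congr fun x y z => ?_
  rw [eq_comm, ← sub_eq_zero, symPart_associator_eq_skewPart_skewPart μ hassoc]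

/-- For an associative multiplication `μ`, the symmetric part `ρ` is associative iff
the skew-symmetric part `ψ` is `2`-step nilpotent: `ψ(y,ψ(x,z)) = 0` for all `x,y,z`. -/
theorem symPart_associative_iff_two_step_nilpotent {K A : Type*} [Field K] [CharZero K]
    [AddCommGroup A] [Module K A]
    (μ : A →ₗ[K] A →ₗ[K] A)
    (hassoc : ∀ x y z : A, μ x (μ y z) = μ (μ x y) z) :
    (∀ x y z : A, symPart μ x (symPart μ y z) = symPart μ (symPart μ x y) z) ↔
    (∀ x y z : A, skewPart μ y (skewPart μ x z) = 0) :=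
  symPart_associative_iff_two_step_nilpotent_general μ hassoc
end

section
/- Let μ be a multiplication on A satisfying the Leibniz identity μ(x,μ(y,z)) = μ(μ(x,y),z) + μ(y,μ(x,z)) for all x,y,z ∈ A, with symmetric part ρ(x,y) = μ(x,y) + μ(y,x) and skew-symmetric part ψ(x,y) = μ(x,y) − μ(y,x). Then for all x,y,z ∈ A: (1) ρ(x,ρ(y,z)) = ψ(x,ρ(y,z)); (2) ρ(x,ψ(y,z)) − ρ(y,ψ(x,z)) − ρ(z,ψ(x,y)) + 2ψ(x,ρ(y,z)) − 2ψ(y,ρ(x,z)) + J(x,y,z) = 0, where J(x,y,z) = ψ(x,ψ(y,z)) + ψ(y,ψ(z,x)) + ψ(z,ψ(x,y)) is the Jacobiator of ψ. -/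
def jacobiator {K A : Type*} [Field K] [AddCommGroup A] [Module K A]
    (μ : A →ₗ[K] A →ₗ[K] A) (x y z : A) : A :=
  skewPart μ x (skewPart μ y z) + skewPart μ y (skewPart μ z x) +
    skewPart μ z (skewPart μ x y)

section Leibniz

variable {K A : Type*} [Field K] [AddCommGroup A] [Module K A] {μ : A →ₗ[K] A →ₗ[K] A}

theorem mul_mul_eq_of_leibniz
    (hleib : ∀ x y z : A, μ x (μ y z) = μ (μ x y) z + μ y (μ x z)) (a b c : A) :
    μ (μ a b) c = μ a (μ b c) - μ b (μ a c) := by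
  rw [hleib]
  abel

theorem symPart_mul_eq_zero
    (hleib : ∀ x y z : A, μ x (μ y z) = μ (μ x y) z + μ y (μ x z)) (x y z : A) :
    μ (symPart μ y z) x = 0 := by
  simp only [symPart, map_add, LinearMap.add_apply, mul_mul_eq_of_leibniz hleib]
  abel

theorem symPart_symPart_eq_skewPart_symPart
    (hleib : ∀ x y z : A, μ x (μ y z) = μ (μ x y) z + μ y (μ x z)) (x y z : A) :
    symPart μ x (symPart μ y z) = skewPart μ x (symPart μ y z) := by
  rw [symPart, skewPart, symPart_mul_eq_zero hleib, add_zero, sub_zero]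

theorem symPart_skewPart_add_jacobiator_eq_zero
    (hleib : ∀ x y z : A, μ x (μ y z) = μ (μ x y) z + μ y (μ x z)) (x y z : A) :
    symPart μ x (skewPart μ y z) - symPart μ y (skewPart μ x z) -
        symPart μ z (skewPart μ x y) + (2 : K) • skewPart μ x (symPart μ y z) -
        (2 : K) • skewPart μ y (symPart μ x z) + jacobiator μ x y z = 0 := by
  simp only [symPart, skewPart, jacobiator, map_add, map_sub, LinearMap.add_apply,
    LinearMap.sub_apply, two_smul, mul_mul_eq_of_leibniz hleib]
  abel

end Leibniz

theorem leibniz_polarization_general {K A : Type*} [Field K]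
    [AddCommGroup A] [Module K A]
    (μ : A →ₗ[K] A →ₗ[K] A)
    (hleib : ∀ x y z : A, μ x (μ y z) = μ (μ x y) z + μ y (μ x z)) :
    (∀ x y z : A, symPart μ x (symPart μ y z) = skewPart μ x (symPart μ y z)) ∧
    (∀ x y z : A,
      symPart μ x (skewPart μ y z) - symPart μ y (skewPart μ x z) -
        symPart μ z (skewPart μ x y) + (2 : K) • skewPart μ x (symPart μ y z) -
        (2 : K) • skewPart μ y (symPart μ x z) + jacobiator μ x y z = 0) :=
  ⟨symPart_symPart_eq_skewPart_symPart hleib, symPart_skewPart_add_jacobiator_eq_zero hleib⟩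

/-- Polarization of a Leibniz multiplication `μ`: its symmetric part `ρ` and
skew-symmetric part `ψ` satisfy `ρ(x,ρ(y,z)) = ψ(x,ρ(y,z))` and
`ρ(x,ψ(y,z)) − ρ(y,ψ(x,z)) − ρ(z,ψ(x,y)) + 2ψ(x,ρ(y,z)) − 2ψ(y,ρ(x,z)) + J(x,y,z) = 0`. -/
theorem leibniz_polarization {K A : Type*} [Field K] [CharZero K]
    [AddCommGroup A] [Module K A]
    (μ : A →ₗ[K] A →ₗ[K] A)
    (hleib : ∀ x y z : A, μ x (μ y z) = μ (μ x y) z + μ y (μ x z)) :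
    (∀ x y z : A, symPart μ x (symPart μ y z) = skewPart μ x (symPart μ y z)) ∧
    (∀ x y z : A,
      symPart μ x (skewPart μ y z) - symPart μ y (skewPart μ x z) -
        symPart μ z (skewPart μ x y) + (2 : K) • skewPart μ x (symPart μ y z) -
        (2 : K) • skewPart μ y (symPart μ x z) + jacobiator μ x y z = 0) :=
  leibniz_polarization_general μ hleib
end
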